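/- Let there be n agents and n+2 goods g_1, ..., g_{n+2} ordered so that c(g_k) ≤ c(g_ℓ) for all k < ℓ, and suppose c(g_4) ≤ c(g_2) + c(g_3). Then for an agent whose approval set is all of M (so whose valuation equals c), the maximin fair share is MMS^n(M) = min( c(g_1) + c(g_4), c(g_2) + c(g_3), c(g_5) ). -/

import Mathlib

open Finset

/-- The bundle of agent `i` under the assignment `π` of the `n + 2` goods to agents. -/
def bundleOf {n : ℕ} (π : Fin (n + 2) → Fin n) (i : Fin n) : Finset (Fin (n + 2)) :=
  Finset.univ.filter (fun g => π g = i)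

/-- Maximin fair share of an agent who values every good at its cost, with `n`
agents and goods `Fin (n + 2)`: max over `n`-partitions of the minimum bundle cost. -/
noncomputable def mmsAll (n : ℕ) (c : Fin (n + 2) → ℝ) : ℝ :=
  ⨆ π : Fin (n + 2) → Fin n, ⨅ j : Fin n, ∑ g ∈ bundleOf π j, c g

lemma mem_bundleOf {n : ℕ} {π : Fin (n + 2) → Fin n} {i : Fin n} {g : Fin (n+2)} :
    g ∈ bundleOf π i ↔ π g = i := by simp [bundleOf]

lemma card_sum_bundleOf {n : ℕ} (π : Fin (n + 2) → Fin n) :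
    ∑ j : Fin n, (bundleOf π j).card = n + 2 := by
  classical
  have := Finset.card_eq_sum_card_fiberwise (f := π) (s := Finset.univ) (t := Finset.univ)
    (fun x _ => mem_univ _)
  simpa [bundleOf, Finset.card_univ] using this.symm

lemma bundleOf_disjoint {n : ℕ} (π : Fin (n + 2) → Fin n) {j k : Fin n} (h : j ≠ k) :
    Disjoint (bundleOf π j) (bundleOf π k) := by
  rw [Finset.disjoint_left]
  intro g hj hk
  exact h ((mem_bundleOf.mp hj).symm.trans (mem_bundleOf.mp hk))

/-- crux counting: T = set of big bundles -/
lemma bigT {n : ℕ} (π : Fin (n + 2) → Fin n)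
    (hne : ∀ j, (bundleOf π j).Nonempty) :
    ((Finset.univ.filter fun j => 2 ≤ (bundleOf π j).card).biUnion (bundleOf π)).card
      = (Finset.univ.filter fun j => 2 ≤ (bundleOf π j).card).card + 2 ∧
    (Finset.univ.filter fun j => 2 ≤ (bundleOf π j).card).card ≤ 2 := by
  classical
  set T := Finset.univ.filter fun j => 2 ≤ (bundleOf π j).card with hT
  have hsplit : ∑ j ∈ T, (bundleOf π j).card + ∑ j ∈ Tᶜ, (bundleOf π j).card = n + 2 := by
    rw [Finset.sum_add_sum_compl]
    exact card_sum_bundleOf π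
  have hcompl : ∀ j ∈ Tᶜ, (bundleOf π j).card = 1 := by
    intro j hj
    have h1 : 1 ≤ (bundleOf π j).card := Finset.card_pos.mpr (hne j)
    have h2 : ¬ 2 ≤ (bundleOf π j).card := by
      simpa [hT] using (Finset.mem_compl.mp hj)
    omega
  have hTc : ∑ j ∈ Tᶜ, (bundleOf π j).card = n - T.card := by
    rw [Finset.sum_congr rfl hcompl]
    simp [Finset.card_compl]
  have hTle : T.card ≤ n := by simpa using Finset.card_le_card (Finset.subset_univ T)
  have hbig : 2 * T.card ≤ ∑ j ∈ T, (bundleOf π j).card := by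
    calc 2 * T.card = ∑ _j ∈ T, 2 := by rw [Finset.sum_const]; ring
    _ ≤ _ := Finset.sum_le_sum (fun j hj => by simpa [hT] using (Finset.mem_filter.mp hj).2)
  have hU : (T.biUnion (bundleOf π)).card = ∑ j ∈ T, (bundleOf π j).card :=
    Finset.card_biUnion (fun j _ k _ hjk => bundleOf_disjoint π hjk)
  constructor
  · omega
  · omega

lemma subset_bigU {n : ℕ} (π : Fin (n + 2) → Fin n) (S : Finset (Fin (n+2)))
    (hS : ∀ g ∈ S, 2 ≤ (bundleOf π (π g)).card) :
    S ⊆ (Finset.univ.filter fun j => 2 ≤ (bundleOf π j).card).biUnion (bundleOf π) := by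
  intro g hg
  refine Finset.mem_biUnion.mpr ⟨π g, ?_, mem_bundleOf.mpr rfl⟩
  simp [hS g hg]

lemma card_le_four {n : ℕ} (π : Fin (n + 2) → Fin n)
    (hne : ∀ j, (bundleOf π j).Nonempty) (S : Finset (Fin (n+2)))
    (hS : ∀ g ∈ S, 2 ≤ (bundleOf π (π g)).card) : S.card ≤ 4 := by
  obtain ⟨h1, h2⟩ := bigT π hne
  have := Finset.card_le_card (subset_bigU π S hS)
  omega

lemma two_pairs {n : ℕ} (π : Fin (n + 2) → Fin n)
    (hne : ∀ j, (bundleOf π j).Nonempty) (S : Finset (Fin (n+2))) (hcard : S.card = 4)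
    (hS : ∀ g ∈ S, 2 ≤ (bundleOf π (π g)).card) :
    ∀ g ∈ S, bundleOf π (π g) ⊆ S ∧ (bundleOf π (π g)).card = 2 := by
  classical
  obtain ⟨h1, h2⟩ := bigT π hne
  set T := Finset.univ.filter fun j => 2 ≤ (bundleOf π j).card with hT
  have hsub := subset_bigU π S hS
  have hcle : S.card ≤ (T.biUnion (bundleOf π)).card := Finset.card_le_card hsub
  have h1' : (T.biUnion (bundleOf π)).card = T.card + 2 := h1
  have hUle : (T.biUnion (bundleOf π)).card ≤ S.card := by omega
  have hSU : S = T.biUnion (bundleOf π) := Finset.eq_of_subset_of_card_le hsub hUle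
  have hT2 : T.card = 2 := by omega
  obtain ⟨j1, j2, hj12, hTeq⟩ := Finset.card_eq_two.mp hT2
  have hsum : (bundleOf π j1).card + (bundleOf π j2).card = 4 := by
    have hU : (T.biUnion (bundleOf π)).card = ∑ j ∈ T, (bundleOf π j).card :=
      Finset.card_biUnion (fun j _ k _ hjk => bundleOf_disjoint π hjk)
    rw [← hSU, hcard] at hU
    rw [hTeq, Finset.sum_pair hj12] at hU
    omega
  have hj1T : j1 ∈ T := by rw [hTeq]; simp
  have hj2T : j2 ∈ T := by rw [hTeq]; simp [hj12]
  have hb1 : 2 ≤ (bundleOf π j1).card := by simpa [hT] using hj1T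
  have hb2 : 2 ≤ (bundleOf π j2).card := by simpa [hT] using hj2T
  intro g hg
  have hgT : π g ∈ T := by simp [hT, hS g hg]
  have hsubU : bundleOf π (π g) ⊆ T.biUnion (bundleOf π) :=
    Finset.subset_biUnion_of_mem (bundleOf π) hgT
  refine ⟨by rw [hSU]; exact hsubU, ?_⟩
  rw [hTeq] at hgT
  rcases Finset.mem_insert.mp hgT with h | h
  · rw [h]; omega
  · rw [Finset.mem_singleton.mp h]; omega

def pi0 (n : ℕ) (hn : 3 ≤ n) : Fin (n + 2) → Fin n := fun g =>
  if g.val = 0 ∨ g.val = 3 then ⟨0, by omega⟩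
  else if g.val = 1 ∨ g.val = 2 then ⟨1, by omega⟩
  else ⟨g.val - 2, by have := g.isLt; omega⟩

lemma pi0_bundle0 (n : ℕ) (hn : 3 ≤ n) :
    bundleOf (pi0 n hn) ⟨0, by omega⟩ =
      {(⟨0, by linarith⟩ : Fin (n+2)), (⟨3, by linarith⟩ : Fin (n+2))} := by
  ext g
  have := g.isLt
  simp only [mem_bundleOf, pi0, Finset.mem_insert, Finset.mem_singleton, Fin.ext_iff]
  split_ifs with h1 h2 <;> simp <;> simp only [Fin.ext_iff, Fin.val_zero] <;> omega

lemma pi0_bundle1 (n : ℕ) (hn : 3 ≤ n) :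
    bundleOf (pi0 n hn) ⟨1, by omega⟩ =
      {(⟨1, by linarith⟩ : Fin (n+2)), (⟨2, by linarith⟩ : Fin (n+2))} := by
  ext g
  have := g.isLt
  simp only [mem_bundleOf, pi0, Finset.mem_insert, Finset.mem_singleton, Fin.ext_iff]
  split_ifs with h1 h2 <;> simp <;> omega

lemma pi0_bundle_ge (n : ℕ) (hn : 3 ≤ n) (j : Fin n) (hj : 2 ≤ j.val) :
    bundleOf (pi0 n hn) j = {(⟨j.val + 2, by have := j.isLt; omega⟩ : Fin (n+2))} := by
  ext g
  have := g.isLt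
  simp only [mem_bundleOf, pi0, Finset.mem_singleton, Fin.ext_iff]
  split_ifs with h1 h2 <;> simp <;> omega


theorem mms_aux (n : ℕ) (hn : 3 ≤ n)
    (c : Fin (n + 2) → ℝ) (hc : ∀ g, 0 ≤ c g) (hmono : Monotone c)
    (e0 e1 e2 e3 e4 : Fin (n + 2))
    (hv0 : e0.val = 0) (hv1 : e1.val = 1) (hv2 : e2.val = 2)
    (hv3 : e3.val = 3) (hv4 : e4.val = 4)
    (h4 : c e3 ≤ c e1 + c e2) :
    mmsAll n c = min (c e0 + c e3) (min (c e1 + c e2) (c e4)) := by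
  haveI : Nonempty (Fin n) := ⟨⟨0, by omega⟩⟩
  have h01 : c e0 ≤ c e1 := hmono (by rw [Fin.le_def]; omega)
  have h12 : c e1 ≤ c e2 := hmono (by rw [Fin.le_def]; omega)
  have h23 : c e2 ≤ c e3 := hmono (by rw [Fin.le_def]; omega)
  have h34 : c e3 ≤ c e4 := hmono (by rw [Fin.le_def]; omega)
  apply le_antisymm
  · -- upper bound
    apply ciSup_le
    intro π
    have hle : ∀ j, (⨅ j : Fin n, ∑ g ∈ bundleOf π j, c g) ≤ ∑ g ∈ bundleOf π j, c g :=
      fun j => ciInf_le (Set.finite_range _).bddBelow j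
    have hne_of : ∀ A : ℝ, 0 ≤ A → (∀ j, A < ∑ g ∈ bundleOf π j, c g) →
        ∀ j, (bundleOf π j).Nonempty := by
      intro A hA hgt j
      rw [Finset.nonempty_iff_ne_empty]
      intro hemp
      have := hgt j
      rw [hemp, Finset.sum_empty] at this
      linarith
    have big_of : ∀ A : ℝ, (∀ j, A < ∑ g ∈ bundleOf π j, c g) →
        ∀ g, c g ≤ A → 2 ≤ (bundleOf π (π g)).card := by
      intro A hgt g hg
      have hmem : g ∈ bundleOf π (π g) := mem_bundleOf.mpr rfl
      by_contra hlt
      push_neg at hlt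
      have hpos : 1 ≤ (bundleOf π (π g)).card := Finset.card_pos.mpr ⟨g, hmem⟩
      have h1 : (bundleOf π (π g)).card = 1 := by omega
      obtain ⟨x, hx⟩ := Finset.card_eq_one.mp h1
      rw [hx, Finset.mem_singleton] at hmem
      have := hgt (π g)
      rw [hx, ← hmem, Finset.sum_singleton] at this
      linarith
    have hcard4 : ({e0, e1, e2, e3} : Finset (Fin (n+2))).card = 4 := by
      rw [Finset.card_insert_of_notMem (by simp [Fin.ext_iff]; omega),
        Finset.card_insert_of_notMem (by simp [Fin.ext_iff]; omega),
        Finset.card_insert_of_notMem (by simp [Fin.ext_iff]; omega),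
        Finset.card_singleton]
    refine le_min ?_ (le_min ?_ ?_)
    · -- ≤ c e0 + c e3
      by_contra h
      push_neg at h
      have hgt : ∀ j, c e0 + c e3 < ∑ g ∈ bundleOf π j, c g :=
        fun j => lt_of_lt_of_le h (hle j)
      have hA : (0:ℝ) ≤ c e0 + c e3 := by have := hc e0; have := hc e3; linarith
      have hne := hne_of _ hA hgt
      have hbig : ∀ g ∈ ({e0, e1, e2, e3} : Finset (Fin (n+2))), 2 ≤ (bundleOf π (π g)).card := by
        intro g hg
        simp only [Finset.mem_insert, Finset.mem_singleton] at hg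
        have hc0 := hc e0
        rcases hg with h' | h' | h' | h' <;> subst h' <;> apply big_of _ hgt <;> linarith
      have htp := two_pairs π hne _ hcard4 hbig
      obtain ⟨hB0sub, hB0card⟩ := htp e0 (by simp)
      have he0mem : e0 ∈ bundleOf π (π e0) := mem_bundleOf.mpr rfl
      obtain ⟨x, hxmem, hxne⟩ := Finset.exists_mem_ne (s := bundleOf π (π e0)) (by omega) e0
      have hB0 : ({e0, x} : Finset (Fin (n+2))) = bundleOf π (π e0) := by
        apply Finset.eq_of_subset_of_card_le
        · intro g hg
          simp only [Finset.mem_insert, Finset.mem_singleton] at hg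
          rcases hg with h' | h' <;> subst h' <;> [exact he0mem; exact hxmem]
        · rw [Finset.card_insert_of_notMem (by simpa using hxne.symm), Finset.card_singleton,
            hB0card]
      have hsum0 : ∑ g ∈ bundleOf π (π e0), c g = c e0 + c x := by
        rw [← hB0, Finset.sum_pair (Ne.symm hxne)]
      have hxS : x ∈ ({e0, e1, e2, e3} : Finset (Fin (n+2))) := hB0sub hxmem
      simp only [Finset.mem_insert, Finset.mem_singleton] at hxS
      have hgt0 := hgt (π e0)
      rw [hsum0] at hgt0
      rcases hxS with h' | h' | h' | h' <;> subst h' <;> first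
        | exact absurd rfl hxne
        | linarith
    · -- ≤ c e1 + c e2
      by_contra h
      push_neg at h
      have hgt : ∀ j, c e1 + c e2 < ∑ g ∈ bundleOf π j, c g :=
        fun j => lt_of_lt_of_le h (hle j)
      have hA : (0:ℝ) ≤ c e1 + c e2 := by have := hc e1; have := hc e2; linarith
      have hne := hne_of _ hA hgt
      have hbig : ∀ g ∈ ({e0, e1, e2, e3} : Finset (Fin (n+2))), 2 ≤ (bundleOf π (π g)).card := by
        intro g hg
        simp only [Finset.mem_insert, Finset.mem_singleton] at hg
        have hc1 := hc e1
        have hc2 := hc e2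
        rcases hg with h' | h' | h' | h' <;> subst h' <;> apply big_of _ hgt <;> linarith
      have htp := two_pairs π hne _ hcard4 hbig
      obtain ⟨hB0sub, hB0card⟩ := htp e0 (by simp)
      have he0mem : e0 ∈ bundleOf π (π e0) := mem_bundleOf.mpr rfl
      obtain ⟨x, hxmem, hxne⟩ := Finset.exists_mem_ne (s := bundleOf π (π e0)) (by omega) e0
      have hB0 : ({e0, x} : Finset (Fin (n+2))) = bundleOf π (π e0) := by
        apply Finset.eq_of_subset_of_card_le
        · intro g hg
          simp only [Finset.mem_insert, Finset.mem_singleton] at hg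
          rcases hg with h' | h' <;> subst h' <;> [exact he0mem; exact hxmem]
        · rw [Finset.card_insert_of_notMem (by simpa using hxne.symm), Finset.card_singleton,
            hB0card]
      have hsum0 : ∑ g ∈ bundleOf π (π e0), c g = c e0 + c x := by
        rw [← hB0, Finset.sum_pair (Ne.symm hxne)]
      have hxS : x ∈ ({e0, e1, e2, e3} : Finset (Fin (n+2))) := hB0sub hxmem
      simp only [Finset.mem_insert, Finset.mem_singleton] at hxS
      have hgt0 := hgt (π e0)
      rw [hsum0] at hgt0
      have hx3 : x = e3 := by
        rcases hxS with h' | h' | h' | h'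
        · exact absurd h' hxne
        · subst h'; linarith
        · subst h'; linarith
        · exact h'
      subst hx3
      obtain ⟨hB1sub, hB1card⟩ := htp e1 (by simp)
      have he1mem : e1 ∈ bundleOf π (π e1) := mem_bundleOf.mpr rfl
      have hne10 : π e1 ≠ π e0 := by
        intro heq
        have h' : e1 ∈ bundleOf π (π e0) := by rw [← heq]; exact he1mem
        rw [← hB0] at h'
        simp only [Finset.mem_insert, Finset.mem_singleton, Fin.ext_iff] at h'
        omega
      have hdisj := bundleOf_disjoint π hne10
      have hB1sub2 : bundleOf π (π e1) ⊆ ({e1, e2} : Finset (Fin (n+2))) := by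
        intro g hg
        have hgS := hB1sub hg
        have hgn : g ∉ bundleOf π (π e0) := Finset.disjoint_left.mp hdisj hg
        rw [← hB0] at hgn
        simp only [Finset.mem_insert, Finset.mem_singleton] at hgS hgn ⊢
        push_neg at hgn
        rcases hgS with h' | h' | h' | h' <;> tauto
      have hB1 : bundleOf π (π e1) = ({e1, e2} : Finset (Fin (n+2))) := by
        apply Finset.eq_of_subset_of_card_le hB1sub2
        rw [Finset.card_insert_of_notMem (by simp [Fin.ext_iff]; omega),
          Finset.card_singleton, hB1card]
      have hgt1 := hgt (π e1)
      rw [hB1, Finset.sum_pair (by rw [Ne, Fin.ext_iff]; omega)] at hgt1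
      linarith
    · -- ≤ c e4
      by_contra h
      push_neg at h
      have hgt : ∀ j, c e4 < ∑ g ∈ bundleOf π j, c g :=
        fun j => lt_of_lt_of_le h (hle j)
      have hne := hne_of _ (hc e4) hgt
      have hbig : ∀ g ∈ ({e0, e1, e2, e3, e4} : Finset (Fin (n+2))),
          2 ≤ (bundleOf π (π g)).card := by
        intro g hg
        simp only [Finset.mem_insert, Finset.mem_singleton] at hg
        rcases hg with h' | h' | h' | h' | h' <;> subst h' <;> apply big_of _ hgt <;> linarith
      have hcard5 : ({e0, e1, e2, e3, e4} : Finset (Fin (n+2))).card = 5 := by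
        rw [Finset.card_insert_of_notMem (by simp [Fin.ext_iff]; omega),
          Finset.card_insert_of_notMem (by simp [Fin.ext_iff]; omega),
          Finset.card_insert_of_notMem (by simp [Fin.ext_iff]; omega),
          Finset.card_insert_of_notMem (by simp [Fin.ext_iff]; omega),
          Finset.card_singleton]
      have := card_le_four π hne _ hbig
      omega
  · -- lower bound
    have E0 : (⟨0, by linarith⟩ : Fin (n+2)) = e0 := Fin.ext (by simp [hv0])
    have E1 : (⟨1, by linarith⟩ : Fin (n+2)) = e1 := Fin.ext (by simp [hv1])
    have E2 : (⟨2, by linarith⟩ : Fin (n+2)) = e2 := Fin.ext (by simp [hv2])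
    have E3 : (⟨3, by linarith⟩ : Fin (n+2)) = e3 := Fin.ext (by simp [hv3])
    have E4 : (⟨4, by linarith⟩ : Fin (n+2)) = e4 := Fin.ext (by simp [hv4])
    have hsup := le_ciSup (f := fun π : Fin (n+2) → Fin n => ⨅ j : Fin n, ∑ g ∈ bundleOf π j, c g)
      (Set.finite_range _).bddAbove (pi0 n hn)
    refine le_trans ?_ hsup
    apply le_ciInf
    intro j
    by_cases hj0 : j = ⟨0, by omega⟩
    · subst hj0
      rw [pi0_bundle0 n hn, Finset.sum_pair (by rw [Ne, Fin.ext_iff]; omega), E0, E3]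
      exact min_le_left _ _
    · by_cases hj1 : j = ⟨1, by omega⟩
      · subst hj1
        rw [pi0_bundle1 n hn, Finset.sum_pair (by rw [Ne, Fin.ext_iff]; omega), E1, E2]
        exact le_trans (min_le_right _ _) (min_le_left _ _)
      · have hj2 : 2 ≤ j.val := by
          rw [Fin.ext_iff] at hj0 hj1
          omega
        rw [pi0_bundle_ge n hn j hj2, Finset.sum_singleton]
        refine le_trans (le_trans (min_le_right _ _) (min_le_right _ _)) (hmono ?_)
        rw [Fin.le_def, hv4]
        show 4 ≤ j.val + 2
        omega

/-- With `n ≥ 3` agents and `n + 2` goods `g_1, …, g_{n+2}` (indexed `0, …, n+1`)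
ordered by nondecreasing cost, if `c g₄ ≤ c g₂ + c g₃` then the maximin fair share
of an agent approving all goods is `min (c g₁ + c g₄) (min (c g₂ + c g₃) (c g₅))`. -/
theorem mms_value_small_fourth_good (n : ℕ) (hn : 3 ≤ n)
    (c : Fin (n + 2) → ℝ) (hc : ∀ g, 0 ≤ c g) (hmono : Monotone c)
    (h4 : c (⟨3, by omega⟩ : Fin (n + 2)) ≤
      c (⟨1, by omega⟩ : Fin (n + 2)) + c (⟨2, by omega⟩ : Fin (n + 2))) :
    mmsAll n c =
      min (c (⟨0, by omega⟩ : Fin (n + 2)) + c (⟨3, by omega⟩ : Fin (n + 2)))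
        (min (c (⟨1, by omega⟩ : Fin (n + 2)) + c (⟨2, by omega⟩ : Fin (n + 2)))
          (c (⟨4, by omega⟩ : Fin (n + 2)))) := by
  exact mms_aux n hn c hc hmono _ _ _ _ _ rfl rfl rfl rfl rfl h4
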